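/- arXiv:2409.06093 — 3 statements merged into one kernel-verified Lean document; each statement's English description precedes it below -/
import Mathlib

section
/- For a finite-dimensional real vector space V equipped with boundary/coboundary operators coming from a simplicial complex, Har_p(K) equals the orthogonal complement of B_p(K) ⊕ B^p(K) inside C_p(K); equivalently, C_p(K) decomposes orthogonally as B_p(K) ⊕ Har_p(K) ⊕ B^p(K) (the Hodge decomposition for simplicial complexes). -/
/-!
Over an ordered field the dot product is anisotropic, so `ker A = (range Aᵀ)ᗮ` for every matrix `A`.
Applied to `∂_p` and `∂_{p+1}ᵀ` this makes `Har_p` the orthogonal complement of `B_p ⊔ B^p`, and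
`W ⊔ Wᗮ = ⊤` in finite dimension gives the decomposition. The relation `∂_p ∂_{p+1} = 0` says
`B_p ≤ ker ∂_p = (B^p)ᗮ`.
-/

namespace Matrix

section CommSemiring

variable {R n : Type*} [CommSemiring R] [Fintype n]

abbrev dotProductOrthogonal (W : Submodule R (n → R)) : Submodule R (n → R) :=
  LinearMap.BilinForm.orthogonal (dotProductBilin R R) W

theorem mem_dotProductOrthogonal_iff {W : Submodule R (n → R)} {x : n → R} :
    x ∈ dotProductOrthogonal W ↔ ∀ y ∈ W, x ⬝ᵥ y = 0 := by
  simp only [LinearMap.BilinForm.mem_orthogonal_iff, dotProductBilin_apply_apply, dotProduct_comm]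

theorem dotProductOrthogonal_sup (V W : Submodule R (n → R)) :
    dotProductOrthogonal (V ⊔ W) = dotProductOrthogonal V ⊓ dotProductOrthogonal W := by
  ext x
  simp only [Submodule.mem_inf, mem_dotProductOrthogonal_iff]
  refine ⟨fun h => ⟨fun y hy => h y (Submodule.mem_sup_left hy),
    fun y hy => h y (Submodule.mem_sup_right hy)⟩, fun ⟨hV, hW⟩ y hy => ?_⟩
  obtain ⟨v, hv, w, hw, rfl⟩ := Submodule.mem_sup.1 hy
  rw [dotProduct_add, hV v hv, hW w hw, add_zero]

theorem range_mulVecLin_le_ker_of_mul_eq_zero {l m : Type*} [Fintype m]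
    {A : Matrix l m R} {B : Matrix m n R} (hAB : A * B = 0) :
    LinearMap.range B.mulVecLin ≤ LinearMap.ker A.mulVecLin := by
  rw [LinearMap.range_le_ker_iff, ← mulVecLin_mul, hAB, mulVecLin_zero]

end CommSemiring

section OrderedCommRing

variable {R l m n : Type*} [CommRing R] [LinearOrder R] [IsStrictOrderedRing R] [Fintype m]
  [Fintype n]

theorem ker_mulVecLin_eq_dotProductOrthogonal_range_transpose (A : Matrix m n R) :
    LinearMap.ker A.mulVecLin = dotProductOrthogonal (LinearMap.range Aᵀ.mulVecLin) := by
  ext x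
  simp only [LinearMap.mem_ker, mulVecLin_apply, mem_dotProductOrthogonal_iff, LinearMap.mem_range,
    forall_exists_index, forall_apply_eq_imp_iff, dotProduct_mulVec, vecMul_transpose]
  exact ⟨fun h v => by rw [h, zero_dotProduct], fun h => dotProduct_self_eq_zero.1 (h _)⟩

theorem ker_inf_ker_transpose_eq_dotProductOrthogonal [Fintype l]
    (A : Matrix l n R) (B : Matrix n m R) :
    LinearMap.ker A.mulVecLin ⊓ LinearMap.ker Bᵀ.mulVecLin =
      dotProductOrthogonal (LinearMap.range B.mulVecLin ⊔ LinearMap.range Aᵀ.mulVecLin) := by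
  rw [dotProductOrthogonal_sup, ker_mulVecLin_eq_dotProductOrthogonal_range_transpose,
    ker_mulVecLin_eq_dotProductOrthogonal_range_transpose, transpose_transpose, inf_comm]

end OrderedCommRing

/-- The dot product is anisotropic, so `W ⊓ Wᗮ = ⊥`; a dimension count does the rest. -/
theorem sup_dotProductOrthogonal_eq_top {K n : Type*} [Field K] [LinearOrder K]
    [IsStrictOrderedRing K] [Fintype n] (W : Submodule K (n → K)) :
    W ⊔ dotProductOrthogonal W = ⊤ := by
  have hrefl : (dotProductBilin K K : LinearMap.BilinForm K (n → K)).IsRefl :=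
    fun x y h => by rwa [dotProductBilin_apply_apply, dotProduct_comm] at h
  refine ((LinearMap.BilinForm.isCompl_orthogonal_iff_disjoint hrefl).2 ?_).sup_eq_top
  refine Submodule.disjoint_def.2 fun x hxW hx => ?_
  exact dotProduct_self_eq_zero.1 (mem_dotProductOrthogonal_iff.1 hx x hxW)

end Matrix

open Matrix

/-- Here `D₁ = ∂_p` and `D₂ = ∂_{p+1}`: `ker D₁ ⊓ ker D₂ᵀ` is `Har_p(K)`, `range D₂` is
`B_p(K)` and `range D₁ᵀ` is `B^p(K)`. -/
theorem hodge_decomposition {a b c : ℕ}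
    (D₁ : Matrix (Fin a) (Fin b) ℝ) (D₂ : Matrix (Fin b) (Fin c) ℝ)
    (hdd : D₁ * D₂ = 0) :
    (∀ x : Fin b → ℝ,
      x ∈ LinearMap.ker D₁.mulVecLin ⊓ LinearMap.ker D₂.transpose.mulVecLin ↔
        ∀ y ∈ LinearMap.range D₂.mulVecLin ⊔ LinearMap.range D₁.transpose.mulVecLin,
          ∑ i, x i * y i = 0) ∧
    (LinearMap.range D₂.mulVecLin ⊔
      (LinearMap.ker D₁.mulVecLin ⊓ LinearMap.ker D₂.transpose.mulVecLin) ⊔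
      LinearMap.range D₁.transpose.mulVecLin = ⊤) ∧
    (∀ x ∈ LinearMap.range D₂.mulVecLin,
      ∀ y ∈ LinearMap.ker D₁.mulVecLin ⊓ LinearMap.ker D₂.transpose.mulVecLin,
        ∑ i, x i * y i = 0) ∧
    (∀ x ∈ LinearMap.range D₂.mulVecLin,
      ∀ y ∈ LinearMap.range D₁.transpose.mulVecLin, ∑ i, x i * y i = 0) ∧
    (∀ x ∈ LinearMap.ker D₁.mulVecLin ⊓ LinearMap.ker D₂.transpose.mulVecLin,
      ∀ y ∈ LinearMap.range D₁.transpose.mulVecLin, ∑ i, x i * y i = 0) := by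
  have hHar := ker_inf_ker_transpose_eq_dotProductOrthogonal D₁ D₂
  have hB : LinearMap.range D₂.mulVecLin ≤
      dotProductOrthogonal (LinearMap.range D₁.transpose.mulVecLin) :=
    ker_mulVecLin_eq_dotProductOrthogonal_range_transpose D₁ ▸
      range_mulVecLin_le_ker_of_mul_eq_zero hdd
  -- `∑ i, x i * y i` is `x ⬝ᵥ y` by definition.
  rw [hHar]
  refine ⟨fun x => mem_dotProductOrthogonal_iff, ?_,
    fun x hx y hy =>
      (dotProduct_comm x y).trans (mem_dotProductOrthogonal_iff.1 hy x (Submodule.mem_sup_left hx)),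
    fun x hx y hy => mem_dotProductOrthogonal_iff.1 (hB hx) y hy,
    fun x hx y hy => mem_dotProductOrthogonal_iff.1 hx y (Submodule.mem_sup_right hy)⟩
  rw [sup_right_comm, sup_dotProductOrthogonal_eq_top]
end

section
/- When a single p-simplex σ is inserted at time t and creates a new p-homology class, the harmonic chain space satisfies: Har_p(K_{t^-}) is mapped injectively into C_p(K_t) and dim Har_p(K_t) = dim Har_p(K_{t^-}) + 1; in general dim Har_p(K_t) − dim Har_p(K_{t^-}) ∈ {0, 1} when adding a single p-simplex. -/
open Matrix
open scoped Classical

namespace Harmonic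

/-- A chain `x` is supported on the set `S` of simplices. -/
def SupportedOn {ι : Type*} (S : Set ι) (x : ι → ℝ) : Prop := ∀ i ∉ S, x i = 0

/-- The submodule of vectors vanishing on `S`. -/
noncomputable def vanishSub {ι : Type*} (S : Set ι) : Submodule ℝ (ι → ℝ) :=
  ⨅ i ∈ S, LinearMap.ker (LinearMap.proj (R := ℝ) (φ := fun _ : ι => ℝ) i)

/-- The submodule of vectors supported on `S`. -/
noncomputable def suppSub {ι : Type*} (S : Set ι) : Submodule ℝ (ι → ℝ) := vanishSub Sᶜ

/-- A sequence of independent cycles in a subspace `A`: each term lies outside the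
linear span of its predecessors. -/
def IndepIn {b n : ℕ} (A : Submodule ℝ (Fin b → ℝ)) (zs : Fin n → (Fin b → ℝ)) : Prop :=
  (∀ i, zs i ∈ A) ∧ ∀ i : Fin n, zs i ∉ Submodule.span ℝ (zs '' {j | j < i})

/-- A filtered simplicial chain complex in three consecutive dimensions `p-1, p, p+1`:
boundary matrices `D₁ = ∂_p`, `D₂ = ∂_{p+1}` with `∂∂ = 0`, and for each time `t ∈ ℝ`
the sets of simplices present at time `t`, monotone in `t` and closed under faces. -/
structure FilteredComplex (a b c : ℕ) where
  D₁ : Matrix (Fin a) (Fin b) ℝ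
  D₂ : Matrix (Fin b) (Fin c) ℝ
  dd : D₁ * D₂ = 0
  Sm : ℝ → Set (Fin a)
  S0 : ℝ → Set (Fin b)
  Sp : ℝ → Set (Fin c)
  monoSm : Monotone Sm
  monoS0 : Monotone S0
  monoSp : Monotone Sp
  closed1 : ∀ t i j, j ∈ S0 t → D₁ i j ≠ 0 → i ∈ Sm t
  closed2 : ∀ t i j, j ∈ Sp t → D₂ i j ≠ 0 → i ∈ S0 t

namespace FilteredComplex

variable {a b c : ℕ} (F : FilteredComplex a b c)

/-- `x` is a `p`-cycle of the subcomplex `K_t`. -/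
def IsCycleAt (t : ℝ) (x : Fin b → ℝ) : Prop :=
  SupportedOn (F.S0 t) x ∧ F.D₁.mulVec x = 0

/-- `x` is a `p`-boundary in the subcomplex `K_t`. -/
def IsBoundaryAt (t : ℝ) (x : Fin b → ℝ) : Prop :=
  ∃ y : Fin c → ℝ, SupportedOn (F.Sp t) y ∧ F.D₂.mulVec y = x

/-- `x` is a `p`-cocycle of the subcomplex `K_t`: its coboundary, computed in `K_t`,
vanishes. -/
def IsCocycleAt (t : ℝ) (x : Fin b → ℝ) : Prop :=
  ∀ j ∈ F.Sp t, F.D₂.transpose.mulVec x j = 0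

/-- `x` is a nontrivial harmonic cycle of `K_t`. -/
def IsHarmonicAt (t : ℝ) (x : Fin b → ℝ) : Prop :=
  F.IsCycleAt t x ∧ F.IsCocycleAt t x ∧ ¬ F.IsBoundaryAt t x

/-- The harmonic span of a cycle: the set of times at which it is a nontrivial
harmonic cycle. -/
def hspan (x : Fin b → ℝ) : Set ℝ := {t | F.IsHarmonicAt t x}

/-- The length of the harmonic span of a cycle (`∞` if the cycle stays harmonic
forever, `0` if it is never harmonic). -/
noncomputable def spanLen (x : Fin b → ℝ) : ENNReal :=
  if F.hspan x = ∅ then 0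
  else if BddAbove (F.hspan x) then ENNReal.ofReal (sSup (F.hspan x) - sInf (F.hspan x))
  else ⊤

/-- The sequence of span lengths of a sequence of cycles. -/
noncomputable def lenSeq {n : ℕ} (zs : Fin n → (Fin b → ℝ)) : Fin n → ENNReal :=
  fun i => F.spanLen (zs i)

/-- The space of `p`-cycles of `K_t`. -/
noncomputable def Zsub (t : ℝ) : Submodule ℝ (Fin b → ℝ) :=
  suppSub (F.S0 t) ⊓ LinearMap.ker F.D₁.mulVecLin

/-- The space of `p`-boundaries of `K_t`. -/
noncomputable def Bsub (t : ℝ) : Submodule ℝ (Fin b → ℝ) :=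
  Submodule.map F.D₂.mulVecLin (suppSub (F.Sp t))

/-- The space of harmonic `p`-cycles of `K_t`. -/
noncomputable def harSub (t : ℝ) : Submodule ℝ (Fin b → ℝ) :=
  F.Zsub t ⊓ Submodule.comap F.D₂.transpose.mulVecLin (vanishSub (F.Sp t))

/-- The space of `p`-cycles of the final complex `K`. -/
def ZK : Submodule ℝ (Fin b → ℝ) := LinearMap.ker F.D₁.mulVecLin

end FilteredComplex

/-- An `ε`-chain-interleaving between two filtered complexes: families of chain maps
`φ_t : C(K_t) → C(K'_{t+ε})` and `ψ_t : C(K'_t) → C(K_{t+ε})` commuting with the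
boundary operators and the filtration inclusions, whose composites are the
`2ε`-shift (inclusion) maps. -/
structure ChainInterleaving {a b c a' b' c' : ℕ}
    (F : FilteredComplex a b c) (G : FilteredComplex a' b' c') (ε : ℝ) where
  φm : ℝ → (Fin a → ℝ) →ₗ[ℝ] (Fin a' → ℝ)
  φ0 : ℝ → (Fin b → ℝ) →ₗ[ℝ] (Fin b' → ℝ)
  φp : ℝ → (Fin c → ℝ) →ₗ[ℝ] (Fin c' → ℝ)
  ψm : ℝ → (Fin a' → ℝ) →ₗ[ℝ] (Fin a → ℝ)
  ψ0 : ℝ → (Fin b' → ℝ) →ₗ[ℝ] (Fin b → ℝ)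
  ψp : ℝ → (Fin c' → ℝ) →ₗ[ℝ] (Fin c → ℝ)
  φm_supp : ∀ t x, SupportedOn (F.Sm t) x → SupportedOn (G.Sm (t + ε)) (φm t x)
  φ0_supp : ∀ t x, SupportedOn (F.S0 t) x → SupportedOn (G.S0 (t + ε)) (φ0 t x)
  φp_supp : ∀ t x, SupportedOn (F.Sp t) x → SupportedOn (G.Sp (t + ε)) (φp t x)
  ψm_supp : ∀ t x, SupportedOn (G.Sm t) x → SupportedOn (F.Sm (t + ε)) (ψm t x)
  ψ0_supp : ∀ t x, SupportedOn (G.S0 t) x → SupportedOn (F.S0 (t + ε)) (ψ0 t x)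
  ψp_supp : ∀ t x, SupportedOn (G.Sp t) x → SupportedOn (F.Sp (t + ε)) (ψp t x)
  φ_chain₁ : ∀ t, (φm t).comp F.D₁.mulVecLin = G.D₁.mulVecLin.comp (φ0 t)
  φ_chain₂ : ∀ t, (φ0 t).comp F.D₂.mulVecLin = G.D₂.mulVecLin.comp (φp t)
  ψ_chain₁ : ∀ t, (ψm t).comp G.D₁.mulVecLin = F.D₁.mulVecLin.comp (ψ0 t)
  ψ_chain₂ : ∀ t, (ψ0 t).comp G.D₂.mulVecLin = F.D₂.mulVecLin.comp (ψp t)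
  φ_nat : ∀ s t, s ≤ t → ∀ x, SupportedOn (F.S0 s) x → φ0 t x = φ0 s x
  ψ_nat : ∀ s t, s ≤ t → ∀ x, SupportedOn (G.S0 s) x → ψ0 t x = ψ0 s x
  comp₁ : ∀ t x, SupportedOn (F.S0 t) x → ψ0 (t + ε) (φ0 t x) = x
  comp₂ : ∀ t x, SupportedOn (G.S0 t) x → φ0 (t + ε) (ψ0 t x) = x

/-- A harmonic-preserving `ε`-chain-interleaving: additionally, any cycle which is
still a cocycle `ρ ≥ ε` time later is sent to a cocycle. -/
structure HarmonicInterleaving {a b c a' b' c' : ℕ}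
    (F : FilteredComplex a b c) (G : FilteredComplex a' b' c') (ε : ℝ)
    extends ChainInterleaving F G ε where
  φ_harm : ∀ t ρ x, ε ≤ ρ → F.IsCycleAt t x → F.IsCocycleAt (t + ρ) x →
    G.IsCocycleAt (t + ε) (φ0 t x)
  ψ_harm : ∀ t ρ x, ε ≤ ρ → G.IsCycleAt t x → G.IsCocycleAt (t + ρ) x →
    F.IsCocycleAt (t + ε) (ψ0 t x)

/-- The chain interleaving distance. -/
noncomputable def dCI {a b c a' b' c' : ℕ}
    (F : FilteredComplex a b c) (G : FilteredComplex a' b' c') : ℝ :=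
  sInf {ε | 0 ≤ ε ∧ Nonempty (ChainInterleaving F G ε)}

/-- The harmonic interleaving distance. -/
noncomputable def dHI {a b c a' b' c' : ℕ}
    (F : FilteredComplex a b c) (G : FilteredComplex a' b' c') : ℝ :=
  sInf {ε | 0 ≤ ε ∧ Nonempty (HarmonicInterleaving F G ε)}

/-- An `ε`-interleaving of the homology persistence modules, encoded via chain-level
lifts: maps sending cycles to cycles and boundaries to boundaries, commuting with
the filtration maps up to boundaries, and composing to the shift maps up to
boundaries. -/
def HomInterleaved {a b c a' b' c' : ℕ}
    (F : FilteredComplex a b c) (G : FilteredComplex a' b' c') (ε : ℝ) : Prop :=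
  ∃ (u : ℝ → (Fin b → ℝ) →ₗ[ℝ] (Fin b' → ℝ)) (v : ℝ → (Fin b' → ℝ) →ₗ[ℝ] (Fin b → ℝ)),
    (∀ t, Submodule.map (u t) (F.Zsub t) ≤ G.Zsub (t + ε)) ∧
    (∀ t, Submodule.map (u t) (F.Bsub t ⊓ F.Zsub t) ≤ G.Bsub (t + ε)) ∧
    (∀ t, Submodule.map (v t) (G.Zsub t) ≤ F.Zsub (t + ε)) ∧
    (∀ t, Submodule.map (v t) (G.Bsub t ⊓ G.Zsub t) ≤ F.Bsub (t + ε)) ∧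
    (∀ s t, s ≤ t → ∀ x ∈ F.Zsub s, u t x - u s x ∈ G.Bsub (t + ε)) ∧
    (∀ s t, s ≤ t → ∀ x ∈ G.Zsub s, v t x - v s x ∈ F.Bsub (t + ε)) ∧
    (∀ t, ∀ x ∈ F.Zsub t, v (t + ε) (u t x) - x ∈ F.Bsub (t + 2 * ε)) ∧
    (∀ t, ∀ x ∈ G.Zsub t, u (t + ε) (v t x) - x ∈ G.Bsub (t + 2 * ε))

/-- The homology-level interleaving distance. -/
noncomputable def dI {a b c a' b' c' : ℕ}
    (F : FilteredComplex a b c) (G : FilteredComplex a' b' c') : ℝ :=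
  sInf {ε | 0 ≤ ε ∧ HomInterleaved F G ε}

/-!
The harmonic cycles are the orthogonal complement of the boundaries inside the cycles
(Hodge decomposition), so `dim Har_p = dim Z_p - dim B_p`. Inserting a `p`-simplex `σ` adds
no `(p+1)`-simplex, so `B_p` does not change, while the cycles of `K_{t^-}` contain the
kernel of the `σ`-coordinate on the cycles of `K_t`, so `dim Z_p` grows by `0` or `1`.
-/

open Module

theorem _root_.Submodule.finrank_le_finrank_inf_ker_add_one {K V : Type*} [Field K]
    [AddCommGroup V] [Module K V] (W : Submodule K V) [FiniteDimensional K W] (f : V →ₗ[K] K) :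
    finrank K W ≤ finrank K (W ⊓ LinearMap.ker f : Submodule K V) + 1 := by
  have hker : (LinearMap.ker (f.domRestrict W)).map W.subtype = W ⊓ LinearMap.ker f := by
    rw [LinearMap.domRestrict, LinearMap.ker_comp, Submodule.map_comap_subtype]
  have hrange : finrank K (LinearMap.range (f.domRestrict W)) ≤ 1 :=
    (Submodule.finrank_le _).trans (finrank_self K).le
  have := (f.domRestrict W).finrank_range_add_finrank_ker
  rw [← hker, Submodule.finrank_map_subtype_eq]
  omega

theorem _root_.Submodule.finrank_add_finrank_of_forall_dotProduct_eq_zero {ι : Type*}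
    [Fintype ι] {B Z H : Submodule ℝ (ι → ℝ)} (hBZ : B ≤ Z)
    (hH : ∀ x, x ∈ H ↔ x ∈ Z ∧ ∀ u ∈ B, u ⬝ᵥ x = 0) :
    finrank ℝ B + finrank ℝ H = finrank ℝ Z := by
  let e : EuclideanSpace ℝ ι →ₗ[ℝ] (ι → ℝ) := (WithLp.linearEquiv 2 ℝ (ι → ℝ)).toLinearMap
  have finrank_comap (p : Submodule ℝ (ι → ℝ)) : finrank ℝ (p.comap e) = finrank ℝ p := by
    rw [Submodule.comap_equiv_eq_map_symm]
    exact LinearEquiv.finrank_map_eq _ _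
  have hH' : H.comap e = (B.comap e)ᗮ ⊓ Z.comap e := by
    ext x
    have inner_eq (u : EuclideanSpace ℝ ι) : inner ℝ u x = e u ⬝ᵥ e x := by
      rw [EuclideanSpace.inner_eq_star_dotProduct, star_trivial, dotProduct_comm]; rfl
    simp only [Submodule.mem_inf, Submodule.mem_comap, Submodule.mem_orthogonal, hH, inner_eq]
    exact and_comm.trans (and_congr_left fun _ =>
      ⟨fun h u hu => h _ hu, fun h u hu => h (WithLp.toLp 2 u) hu⟩)
  have := Submodule.finrank_add_inf_finrank_orthogonal (Submodule.comap_mono (f := e) hBZ)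
  rwa [← hH', finrank_comap, finrank_comap, finrank_comap] at this

@[simp]
theorem mem_vanishSub {ι : Type*} {S : Set ι} {x : ι → ℝ} :
    x ∈ vanishSub S ↔ ∀ i ∈ S, x i = 0 := by
  simp [vanishSub, Submodule.mem_iInf]

@[simp]
theorem mem_suppSub {ι : Type*} {S : Set ι} {x : ι → ℝ} :
    x ∈ suppSub S ↔ SupportedOn S x := by
  simp [suppSub, SupportedOn]

theorem suppSub_mono {ι : Type*} {S T : Set ι} (h : S ⊆ T) : suppSub S ≤ suppSub T :=
  fun _ hx => mem_suppSub.2 fun i hi => mem_suppSub.1 hx i fun hiS => hi (h hiS)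

theorem transpose_mulVec_mem_vanishSub_iff {m n : Type*} [Fintype m] [Fintype n]
    (A : Matrix m n ℝ) (S : Set n) (x : m → ℝ) :
    Aᵀ *ᵥ x ∈ vanishSub S ↔ ∀ u ∈ (suppSub S).map A.mulVecLin, u ⬝ᵥ x = 0 := by
  have adjoint (y : n → ℝ) : A *ᵥ y ⬝ᵥ x = Aᵀ *ᵥ x ⬝ᵥ y := by
    rw [dotProduct_comm, dotProduct_mulVec, mulVec_transpose]
  simp only [mem_vanishSub, Submodule.mem_map, mem_suppSub, mulVecLin_apply,
    forall_exists_index, and_imp, forall_apply_eq_imp_iff₂, adjoint]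
  constructor
  · intro hx y hy
    refine Finset.sum_eq_zero fun i _ => ?_
    by_cases hi : i ∈ S
    · rw [hx i hi, zero_mul]
    · rw [hy i hi, mul_zero]
  · intro h j hj
    have hsingle : SupportedOn S (Pi.single j 1) := fun i hi =>
      Pi.single_eq_of_ne (by rintro rfl; exact hi hj) 1
    simpa using h _ hsingle

namespace FilteredComplex

variable {a b c : ℕ} (F : FilteredComplex a b c)

theorem Bsub_le_Zsub (s : ℝ) : F.Bsub s ≤ F.Zsub s := by
  rintro _ ⟨y, hy, rfl⟩
  rw [SetLike.mem_coe, mem_suppSub] at hy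
  refine ⟨mem_suppSub.2 fun i hi => ?_, ?_⟩
  · change ∑ j, F.D₂ i j * y j = 0
    refine Finset.sum_eq_zero fun j _ => ?_
    by_cases hj : j ∈ F.Sp s
    · rw [not_imp_comm.1 (F.closed2 s i j hj) hi, zero_mul]
    · rw [hy j hj, mul_zero]
  · simp [mulVec_mulVec, F.dd]

theorem finrank_Bsub_add_finrank_harSub (s : ℝ) :
    finrank ℝ (F.Bsub s) + finrank ℝ (F.harSub s) = finrank ℝ (F.Zsub s) :=
  Submodule.finrank_add_finrank_of_forall_dotProduct_eq_zero (F.Bsub_le_Zsub s) fun x =>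
    and_congr_right' (transpose_mulVec_mem_vanishSub_iff F.D₂ (F.Sp s) x)

variable {F}

theorem Zsub_mono {s t : ℝ} (h : F.S0 s ⊆ F.S0 t) : F.Zsub s ≤ F.Zsub t :=
  inf_le_inf_right _ (suppSub_mono h)

theorem harSub_mono {s t : ℝ} (h0 : F.S0 s ⊆ F.S0 t) (hp : F.Sp t ⊆ F.Sp s) :
    F.harSub s ≤ F.harSub t :=
  inf_le_inf (Zsub_mono h0) (Submodule.comap_mono fun _ hx => mem_vanishSub.2
    fun i hi => mem_vanishSub.1 hx i (hp hi))

theorem Zsub_inf_ker_proj_le {s t : ℝ} {σ : Fin b} (h : F.S0 t ⊆ insert σ (F.S0 s)) :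
    F.Zsub t ⊓ LinearMap.ker (LinearMap.proj σ) ≤ F.Zsub s := by
  rintro x ⟨⟨hsupp, hcyc⟩, hσ⟩
  refine ⟨mem_suppSub.2 fun i hi => ?_, hcyc⟩
  by_cases hiσ : i = σ
  · exact hiσ ▸ hσ
  · exact mem_suppSub.1 hsupp i fun hit => (h hit).elim hiσ hi

theorem finrank_Zsub_le_add_one {s t : ℝ} {σ : Fin b} (h : F.S0 t ⊆ insert σ (F.S0 s)) :
    finrank ℝ (F.Zsub t) ≤ finrank ℝ (F.Zsub s) + 1 :=
  ((F.Zsub t).finrank_le_finrank_inf_ker_add_one (LinearMap.proj σ)).trans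
    (Nat.add_le_add_right (Submodule.finrank_mono (Zsub_inf_ker_proj_le h)) 1)

end FilteredComplex

open FilteredComplex in
theorem add_simplex_harmonic_rank_general {a b c : ℕ} (F : FilteredComplex a b c)
    (t t' : ℝ) (σ : Fin b)
    (hS0 : F.S0 t' = insert σ (F.S0 t)) (hSp : F.Sp t' = F.Sp t) :
    F.harSub t ≤ F.harSub t' ∧
    (Module.finrank ℝ (F.harSub t') = Module.finrank ℝ (F.harSub t) ∨
      Module.finrank ℝ (F.harSub t') = Module.finrank ℝ (F.harSub t) + 1) ∧
    (Module.finrank ℝ (F.Zsub t') - Module.finrank ℝ (F.Bsub t') =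
        (Module.finrank ℝ (F.Zsub t) - Module.finrank ℝ (F.Bsub t)) + 1 →
      Module.finrank ℝ (F.harSub t') = Module.finrank ℝ (F.harSub t) + 1) := by
  have hS0_sub : F.S0 t ⊆ F.S0 t' := hS0 ▸ Set.subset_insert σ _
  have hB : F.Bsub t' = F.Bsub t := by rw [Bsub, Bsub, hSp]
  have hZ_ge := Submodule.finrank_mono (Zsub_mono hS0_sub)
  have hZ_le := finrank_Zsub_le_add_one hS0.subset
  have hodge := F.finrank_Bsub_add_finrank_harSub t
  have hodge' := F.finrank_Bsub_add_finrank_harSub t'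
  rw [hB] at hodge' ⊢
  exact ⟨harSub_mono hS0_sub hSp.subset, by omega, fun _ => by omega⟩

/-- When a single `p`-simplex `σ` is inserted at time `t'`, the harmonic chain space
`Har_p(K_t)` is mapped injectively (included) into the chains at `t'`, the dimension of
the harmonic space changes by `0` or `1`, and if a new `p`-homology class is created
(the Betti number `dim Z - dim B` increases by one) then the dimension of the
harmonic space increases by exactly one. -/
theorem add_simplex_harmonic_rank {a b c : ℕ} (F : FilteredComplex a b c)
    (t t' : ℝ) (htt : t ≤ t') (σ : Fin b) (hσ : σ ∉ F.S0 t)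
    (hS0 : F.S0 t' = insert σ (F.S0 t)) (hSm : F.Sm t' = F.Sm t) (hSp : F.Sp t' = F.Sp t) :
    F.harSub t ≤ F.harSub t' ∧
    (Module.finrank ℝ (F.harSub t') = Module.finrank ℝ (F.harSub t) ∨
      Module.finrank ℝ (F.harSub t') = Module.finrank ℝ (F.harSub t) + 1) ∧
    (Module.finrank ℝ (F.Zsub t') - Module.finrank ℝ (F.Bsub t') =
        (Module.finrank ℝ (F.Zsub t) - Module.finrank ℝ (F.Bsub t)) + 1 →
      Module.finrank ℝ (F.harSub t') = Module.finrank ℝ (F.harSub t) + 1) :=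
  add_simplex_harmonic_rank_general F t t' σ hS0 hSp

end Harmonic
end

section
/- Composing harmonic-preserving interleavings: if there is a harmonic-preserving ε₁-chain-interleaving between filtrations F and G, and a harmonic-preserving ε₂-chain-interleaving between G and H (all given by inclusion-type maps commuting appropriately), then there is a harmonic-preserving (ε₁+ε₂)-chain-interleaving between F and H; hence d_{HI}(F,H) ≤ d_{HI}(F,G) + d_{HI}(G,H) (the harmonic interleaving distance satisfies the triangle inequality). -/
open Matrix
open scoped Classical

namespace Harmonic

/-- Cycles persist: being a cycle at time `s` implies being a cycle at any later time. -/
lemma FilteredComplex.IsCycleAt.mono {a b c : ℕ} {F : FilteredComplex a b c} {s t : ℝ}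
    (h : s ≤ t) {x : Fin b → ℝ} (hx : F.IsCycleAt s x) : F.IsCycleAt t x :=
  ⟨fun i hi => hx.1 i (fun h' => hi (F.monoS0 h h')), hx.2⟩

/-- Composition of harmonic-preserving chain interleavings. -/
noncomputable def HarmonicInterleaving.comp {a b c a' b' c' a'' b'' c'' : ℕ}
    {F : FilteredComplex a b c} {G : FilteredComplex a' b' c'}
    {H : FilteredComplex a'' b'' c''} {ε₁ ε₂ : ℝ} (hε₁ : 0 ≤ ε₁) (hε₂ : 0 ≤ ε₂)
    (I : HarmonicInterleaving F G ε₁) (J : HarmonicInterleaving G H ε₂) :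
    HarmonicInterleaving F H (ε₁ + ε₂) where
  φm t := (J.φm (t + ε₁)).comp (I.φm t)
  φ0 t := (J.φ0 (t + ε₁)).comp (I.φ0 t)
  φp t := (J.φp (t + ε₁)).comp (I.φp t)
  ψm t := (I.ψm (t + ε₂)).comp (J.ψm t)
  ψ0 t := (I.ψ0 (t + ε₂)).comp (J.ψ0 t)
  ψp t := (I.ψp (t + ε₂)).comp (J.ψp t)
  φm_supp t x hx := by
    have := J.φm_supp (t + ε₁) _ (I.φm_supp t x hx)
    rwa [show t + ε₁ + ε₂ = t + (ε₁ + ε₂) by ring] at this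
  φ0_supp t x hx := by
    have := J.φ0_supp (t + ε₁) _ (I.φ0_supp t x hx)
    rwa [show t + ε₁ + ε₂ = t + (ε₁ + ε₂) by ring] at this
  φp_supp t x hx := by
    have := J.φp_supp (t + ε₁) _ (I.φp_supp t x hx)
    rwa [show t + ε₁ + ε₂ = t + (ε₁ + ε₂) by ring] at this
  ψm_supp t x hx := by
    have := I.ψm_supp (t + ε₂) _ (J.ψm_supp t x hx)
    rwa [show t + ε₂ + ε₁ = t + (ε₁ + ε₂) by ring] at this
  ψ0_supp t x hx := by
    have := I.ψ0_supp (t + ε₂) _ (J.ψ0_supp t x hx)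
    rwa [show t + ε₂ + ε₁ = t + (ε₁ + ε₂) by ring] at this
  ψp_supp t x hx := by
    have := I.ψp_supp (t + ε₂) _ (J.ψp_supp t x hx)
    rwa [show t + ε₂ + ε₁ = t + (ε₁ + ε₂) by ring] at this
  φ_chain₁ t := by
    rw [LinearMap.comp_assoc, I.φ_chain₁, ← LinearMap.comp_assoc, J.φ_chain₁,
      LinearMap.comp_assoc]
  φ_chain₂ t := by
    rw [LinearMap.comp_assoc, I.φ_chain₂, ← LinearMap.comp_assoc, J.φ_chain₂,
      LinearMap.comp_assoc]
  ψ_chain₁ t := by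
    rw [LinearMap.comp_assoc, J.ψ_chain₁, ← LinearMap.comp_assoc, I.ψ_chain₁,
      LinearMap.comp_assoc]
  ψ_chain₂ t := by
    rw [LinearMap.comp_assoc, J.ψ_chain₂, ← LinearMap.comp_assoc, I.ψ_chain₂,
      LinearMap.comp_assoc]
  φ_nat s t hst x hx := by
    simp only [LinearMap.comp_apply]
    rw [I.φ_nat s t hst x hx,
      J.φ_nat (s + ε₁) (t + ε₁) (by linarith) _ (I.φ0_supp s x hx)]
  ψ_nat s t hst x hx := by
    simp only [LinearMap.comp_apply]
    rw [J.ψ_nat s t hst x hx,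
      I.ψ_nat (s + ε₂) (t + ε₂) (by linarith) _ (J.ψ0_supp s x hx)]
  comp₁ t x hx := by
    simp only [LinearMap.comp_apply]
    have h1 : J.ψ0 (t + (ε₁ + ε₂)) (J.φ0 (t + ε₁) (I.φ0 t x)) = I.φ0 t x := by
      have := J.comp₁ (t + ε₁) _ (I.φ0_supp t x hx)
      rwa [show t + ε₁ + ε₂ = t + (ε₁ + ε₂) by ring] at this
    rw [h1, I.ψ_nat (t + ε₁) (t + (ε₁ + ε₂) + ε₂) (by linarith) _ (I.φ0_supp t x hx),
      I.comp₁ t x hx]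
  comp₂ t x hx := by
    simp only [LinearMap.comp_apply]
    have h1 : I.φ0 (t + (ε₁ + ε₂)) (I.ψ0 (t + ε₂) (J.ψ0 t x)) = J.ψ0 t x := by
      have := I.comp₂ (t + ε₂) _ (J.ψ0_supp t x hx)
      rwa [show t + ε₂ + ε₁ = t + (ε₁ + ε₂) by ring] at this
    rw [h1, J.φ_nat (t + ε₂) (t + (ε₁ + ε₂) + ε₁) (by linarith) _ (J.ψ0_supp t x hx),
      J.comp₂ t x hx]
  φ_harm t ρ x hρ hcyc hcoc := by
    simp only [LinearMap.comp_apply]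
    set s := t + ρ - ε₁ with hs
    have hts : t ≤ s := by simp only [hs]; linarith
    have h1 : G.IsCocycleAt (s + ε₁) (I.φ0 s x) :=
      I.φ_harm s ε₁ x le_rfl (hcyc.mono hts)
        (by rwa [show s + ε₁ = t + ρ by ring])
    rw [I.φ_nat t s hts x hcyc.1] at h1
    have hycyc : G.IsCycleAt (t + ε₁) (I.φ0 t x) := by
      refine ⟨I.φ0_supp t x hcyc.1, ?_⟩
      have := congrArg (fun f : (Fin b → ℝ) →ₗ[ℝ] (Fin a' → ℝ) => f x) (I.φ_chain₁ t)
      simp only [LinearMap.comp_apply, Matrix.mulVecLin_apply] at this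
      rw [← this, hcyc.2]
      exact map_zero _
    have h2 := J.φ_harm (t + ε₁) (ρ - ε₁) (I.φ0 t x) (by linarith)
      hycyc (by rwa [show t + ε₁ + (ρ - ε₁) = s + ε₁ by simp only [hs]; ring])
    rwa [show t + ε₁ + ε₂ = t + (ε₁ + ε₂) by ring] at h2
  ψ_harm t ρ x hρ hcyc hcoc := by
    simp only [LinearMap.comp_apply]
    set s := t + ρ - ε₂ with hs
    have hts : t ≤ s := by simp only [hs]; linarith
    have h1 : G.IsCocycleAt (s + ε₂) (J.ψ0 s x) :=
      J.ψ_harm s ε₂ x le_rfl (hcyc.mono hts)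
        (by rwa [show s + ε₂ = t + ρ by ring])
    rw [J.ψ_nat t s hts x hcyc.1] at h1
    have hycyc : G.IsCycleAt (t + ε₂) (J.ψ0 t x) := by
      refine ⟨J.ψ0_supp t x hcyc.1, ?_⟩
      have := congrArg (fun f : (Fin b'' → ℝ) →ₗ[ℝ] (Fin a' → ℝ) => f x) (J.ψ_chain₁ t)
      simp only [LinearMap.comp_apply, Matrix.mulVecLin_apply] at this
      rw [← this, hcyc.2]
      exact map_zero _
    have h2 := I.ψ_harm (t + ε₂) (ρ - ε₂) (J.ψ0 t x) (by linarith)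
      hycyc (by rwa [show t + ε₂ + (ρ - ε₂) = s + ε₂ by simp only [hs]; ring])
    rwa [show t + ε₂ + ε₁ = t + (ε₁ + ε₂) by ring] at h2

/-- **Composing harmonic-preserving interleavings.** If there is a harmonic-preserving
`ε₁`-chain-interleaving between `F` and `G` and a harmonic-preserving
`ε₂`-chain-interleaving between `G` and `H`, then there is a harmonic-preserving
`(ε₁+ε₂)`-chain-interleaving between `F` and `H`; hence the harmonic interleaving
distance satisfies the triangle inequality. -/
theorem harmonic_interleaving_triangle {a b c a' b' c' a'' b'' c'' : ℕ}
    (F : FilteredComplex a b c) (G : FilteredComplex a' b' c')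
    (H : FilteredComplex a'' b'' c'')
    (ε₁ ε₂ : ℝ) (hε₁ : 0 ≤ ε₁) (hε₂ : 0 ≤ ε₂)
    (hFG : Nonempty (HarmonicInterleaving F G ε₁))
    (hGH : Nonempty (HarmonicInterleaving G H ε₂)) :
    Nonempty (HarmonicInterleaving F H (ε₁ + ε₂)) ∧
    dHI F H ≤ dHI F G + dHI G H := by
  have key : ∀ e₁ e₂ : ℝ, 0 ≤ e₁ → 0 ≤ e₂ → Nonempty (HarmonicInterleaving F G e₁) →
      Nonempty (HarmonicInterleaving G H e₂) →
      Nonempty (HarmonicInterleaving F H (e₁ + e₂)) :=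
    fun e₁ e₂ h1 h2 ⟨I⟩ ⟨J⟩ => ⟨HarmonicInterleaving.comp h1 h2 I J⟩
  refine ⟨key ε₁ ε₂ hε₁ hε₂ hFG hGH, ?_⟩
  set SFG := {ε | 0 ≤ ε ∧ Nonempty (HarmonicInterleaving F G ε)} with hSFG
  set SGH := {ε | 0 ≤ ε ∧ Nonempty (HarmonicInterleaving G H ε)} with hSGH
  set SFH := {ε | 0 ≤ ε ∧ Nonempty (HarmonicInterleaving F H ε)} with hSFH
  have hne₁ : SFG.Nonempty := ⟨ε₁, hε₁, hFG⟩
  have hne₂ : SGH.Nonempty := ⟨ε₂, hε₂, hGH⟩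
  have hbdd : BddBelow SFH := ⟨0, fun x hx => hx.1⟩
  by_contra hcon
  push_neg at hcon
  set δ : ℝ := (dHI F H - (dHI F G + dHI G H)) / 2 with hδdef
  have hδ : 0 < δ := by simp only [hδdef]; linarith
  obtain ⟨e₁, he₁, hlt₁⟩ := Real.lt_sInf_add_pos hne₁ hδ
  obtain ⟨e₂, he₂, hlt₂⟩ := Real.lt_sInf_add_pos hne₂ hδ
  have hmem : e₁ + e₂ ∈ SFH :=
    ⟨add_nonneg he₁.1 he₂.1, key e₁ e₂ he₁.1 he₂.1 he₁.2 he₂.2⟩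
  have : dHI F H ≤ e₁ + e₂ := csInf_le hbdd hmem
  have h1 : dHI F G = sInf SFG := rfl
  have h2 : dHI G H = sInf SGH := rfl
  rw [← h1] at hlt₁
  rw [← h2] at hlt₂
  simp only [hδdef] at hlt₁ hlt₂
  linarith

end Harmonic
end
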